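/- If a connected graph G contains an induced subgraph isomorphic to the complete bipartite graph K_{2,3}, then the path-length distance ∂ of G is not a negative definite kernel, and hence there exists q ∈ [0,1] for which Q_q is not positive semidefinite. -/

import Mathlib

/-!
Put weight `3` on the two vertices of one side of the induced `K_{2,3}` and `-2` on the three
vertices of the other, so that the total weight is zero. Inside an induced `K_{2,3}` the distance
is `1` across the two sides and `2` between distinct vertices of the same side, whatever the
rest of the graph looks like. Hence the form of a kernel `h ∘ ∂` at this weight is
`30 h(0) - 72 h(1) + 42 h(2)`: it is `12 > 0` for `h = id`, and `6 (7q - 5) (q - 1) < 0`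
for `h = q ^ ·` with `5/7 < q < 1`.
-/

open scoped ComplexOrder

/-- `Q`-matrix positive semidefiniteness: the kernel `(x, y) ↦ q ^ ∂(x,y)` is a
positive definite kernel on the vertex set (with `0 ^ 0 = 1`). -/
def QPSD {V : Type*} (G : SimpleGraph V) (q : ℝ) : Prop :=
  ∀ f : V →₀ ℂ,
    0 ≤ ∑ x ∈ f.support, ∑ y ∈ f.support,
      (starRingEnd ℂ) (f x) * f y * (q : ℂ) ^ G.dist x y

/-- A real-valued kernel  is negative definite if the associated quadratic form is
nonpositive on finitely supported functions summing to zero. -/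
def NegDefKer {X : Type*} (d : X → X → ℝ) : Prop :=
  ∀ f : X →₀ ℂ, (∑ x ∈ f.support, f x) = 0 →
    ∑ x ∈ f.support, ∑ y ∈ f.support,
      (starRingEnd ℂ) (f x) * f y * ((d x y : ℝ) : ℂ) ≤ 0

namespace SimpleGraph

variable {V : Type*} {G : SimpleGraph V}

lemma dist_eq_two_of_adj_of_adj {u v w : V} (hne : u ≠ v) (hnadj : ¬ G.Adj u v)
    (huw : G.Adj u w) (hwv : G.Adj w v) : G.dist u v = 2 := by
  have h : G.edist u v = 2 := edist_eq_two_iff.mpr ⟨hne, hnadj, w, huw, hwv.symm⟩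
  rw [dist, h]
  rfl

variable {α β : Type*}

def Embedding.ofCompleteBipartite (a : α → V) (b : β → V)
    (hinj : Function.Injective (Sum.elim a b)) (hab : ∀ i j, G.Adj (a i) (b j))
    (haa : ∀ i i', ¬ G.Adj (a i) (a i')) (hbb : ∀ j j', ¬ G.Adj (b j) (b j')) :
    completeBipartiteGraph α β ↪g G where
  toFun := Sum.elim a b
  inj' := hinj
  map_rel_iff' := by
    rintro (i | j) (i' | j') <;> simp [hab, haa, hbb, G.adj_comm (b _) (a _)]

lemma Embedding.dist_completeBipartiteGraph [Nonempty α] [Nonempty β] [DecidableEq α]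
    [DecidableEq β] (φ : completeBipartiteGraph α β ↪g G) (u v : α ⊕ β) :
    G.dist (φ u) (φ v) = if u = v then 0 else if u.isLeft = v.isLeft then 2 else 1 := by
  by_cases huv : u = v
  · simp [huv]
  have hne : φ u ≠ φ v := φ.injective.ne huv
  rcases u with i | j <;> rcases v with i' | j'
  · simpa [huv] using dist_eq_two_of_adj_of_adj (w := φ (.inr (Classical.arbitrary β))) hne
      (by simp) (by simp) (by simp)
  · simp
  · simp
  · simpa [huv] using dist_eq_two_of_adj_of_adj (w := φ (.inl (Classical.arbitrary α))) hne
      (by simp) (by simp) (by simp)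

end SimpleGraph

section KernelForm

variable {X Y : Type*}

def kernelForm (k : X → X → ℂ) (f : X →₀ ℂ) : ℂ :=
  ∑ x ∈ f.support, ∑ y ∈ f.support, starRingEnd ℂ (f x) * f y * k x y

lemma kernelForm_embDomain (k : X → X → ℂ) (e : Y ↪ X) (g : Y →₀ ℂ) :
    kernelForm k (g.embDomain e) = kernelForm (fun i j => k (e i) (e j)) g := by
  simp [kernelForm, Finsupp.support_embDomain]

lemma kernelForm_eq_sum_univ [Fintype X] (k : X → X → ℂ) (f : X →₀ ℂ) :
    kernelForm k f = ∑ x, ∑ y, starRingEnd ℂ (f x) * f y * k x y := by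
  rw [kernelForm]
  refine Finset.sum_subset (Finset.subset_univ _) (fun x _ hx => by simp_all) |>.trans ?_
  refine Finset.sum_congr rfl fun x _ => Finset.sum_subset (Finset.subset_univ _) ?_
  intro y _ hy
  simp_all

lemma sum_support_embDomain [Fintype Y] (e : Y ↪ X) (g : Y →₀ ℂ) :
    ∑ x ∈ (g.embDomain e).support, g.embDomain e x = ∑ i, g i := by
  simp only [Finsupp.support_embDomain, Finset.sum_map, Finsupp.embDomain_apply_self]
  exact Finset.sum_subset (Finset.subset_univ _) (by simp)

end KernelForm

noncomputable def k23Weight : Fin 2 ⊕ Fin 3 →₀ ℂ :=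
  Finsupp.equivFunOnFinite.symm (Sum.elim 3 (-2))

lemma sum_k23Weight : ∑ i, k23Weight i = 0 := by
  norm_num [k23Weight, Fintype.sum_sum_type]

lemma kernelForm_comp_dist_k23Weight {V : Type*} {G : SimpleGraph V}
    (φ : completeBipartiteGraph (Fin 2) (Fin 3) ↪g G) (h : ℕ → ℂ) :
    kernelForm (fun x y => h (G.dist x y)) (k23Weight.embDomain φ.toEmbedding) =
      30 * h 0 - 72 * h 1 + 42 * h 2 := by
  rw [kernelForm_embDomain, kernelForm_eq_sum_univ]
  simp [Fintype.sum_sum_type, Fin.sum_univ_two, Fin.sum_univ_three, φ.dist_completeBipartiteGraph,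
    k23Weight, map_ofNat]
  ring

theorem stmt18_general {V : Type*} (G : SimpleGraph V)
    (a₁ a₂ b₁ b₂ b₃ : V)
    (hdist : [a₁, a₂, b₁, b₂, b₃].Pairwise (· ≠ ·))
    (hab : ∀ a ∈ [a₁, a₂], ∀ b ∈ [b₁, b₂, b₃], G.Adj a b)
    (haa : ¬ G.Adj a₁ a₂)
    (hbb : ∀ b ∈ [b₁, b₂, b₃], ∀ b' ∈ [b₁, b₂, b₃], ¬ G.Adj b b') :
    ¬ NegDefKer (fun x y : V => (G.dist x y : ℝ)) ∧
      ∃ q ∈ Set.Icc (0 : ℝ) 1, ¬ QPSD G q := by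
  have hinj : Function.Injective (Sum.elim ![a₁, a₂] ![b₁, b₂, b₃]) := by
    simp only [List.pairwise_cons, List.mem_cons, List.not_mem_nil] at hdist
    rintro (i | i) (j | j) h <;> fin_cases i <;> fin_cases j <;> simp_all
  let φ : completeBipartiteGraph (Fin 2) (Fin 3) ↪g G := .ofCompleteBipartite _ _ hinj
    (fun i j => hab _ (by fin_cases i <;> simp) _ (by fin_cases j <;> simp))
    (fun i i' => by fin_cases i <;> fin_cases i' <;> simp [haa, G.adj_comm a₂])
    (fun j j' => hbb _ (by fin_cases j <;> simp) _ (by fin_cases j' <;> simp))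
  set f := k23Weight.embDomain φ.toEmbedding
  refine ⟨fun hneg => ?_, 6 / 7, ⟨by norm_num, by norm_num⟩, fun hpsd => ?_⟩
  · have h := hneg f (by rw [sum_support_embDomain, sum_k23Weight])
    change kernelForm (fun x y => ((G.dist x y : ℝ) : ℂ)) f ≤ 0 at h
    rw [kernelForm_comp_dist_k23Weight φ (fun n => ((n : ℝ) : ℂ))] at h
    norm_num at h
  · have h := hpsd f
    change 0 ≤ kernelForm _ f at h
    rw [kernelForm_comp_dist_k23Weight] at h
    norm_num [Complex.le_def] at h

theorem stmt18 {V : Type*} (G : SimpleGraph V) (hconn : G.Connected)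
    (a₁ a₂ b₁ b₂ b₃ : V)
    (hdist : [a₁, a₂, b₁, b₂, b₃].Pairwise (· ≠ ·))
    (hab : ∀ a ∈ [a₁, a₂], ∀ b ∈ [b₁, b₂, b₃], G.Adj a b)
    (haa : ¬ G.Adj a₁ a₂)
    (hbb : ∀ b ∈ [b₁, b₂, b₃], ∀ b' ∈ [b₁, b₂, b₃], ¬ G.Adj b b') :
    ¬ NegDefKer (fun x y : V => (G.dist x y : ℝ)) ∧
      ∃ q ∈ Set.Icc (0 : ℝ) 1, ¬ QPSD G q :=
  stmt18_general G a₁ a₂ b₁ b₂ b₃ hdist hab haa hbb
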